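/- The centered evaluation f(X) − 𝔼[f(X)] is sub-Gaussian with variance proxy ‖Γc‖₂²/4 under the joint law ℙ: for every λ ∈ ℝ, 𝔼[exp(λ·(f(X) − 𝔼[f(X)]))] ≤ exp(λ²·‖Γc‖₂² / 8), where ‖Γc‖₂² = Σ_{k=1}^N ((Γc)_k)². -/

import Mathlib

open Finset

noncomputable section

/-- Total variation distance between two probability mass functions on a finite type. -/
def dTV {A : Type*} [Fintype A] (μ ν : A → ℝ) : ℝ := (∑ a, |μ a - ν a|) / 2

/-- `p` is a family of causal transition kernels: `p j x` is the conditional distribution of the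
`j`-th coordinate given the history `x`, and it only depends on the coordinates `i < j`. -/
def IsCausalKernel {N : ℕ} {A : Type*} [Fintype A]
    (p : Fin N → (Fin N → A) → A → ℝ) : Prop :=
  (∀ j x a, 0 ≤ p j x a) ∧ (∀ j x, ∑ a, p j x a = 1) ∧
    (∀ j x y, (∀ i, i < j → x i = y i) → p j x = p j y)

/-- The joint law on `A^N` induced by the chain rule `ℙ(x) = ∏_j p_j(x_j | x_{1:j-1})`. -/
def jointLaw {N : ℕ} {A : Type*} [Fintype A]
    (p : Fin N → (Fin N → A) → A → ℝ) : (Fin N → A) → ℝ :=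
  fun x => ∏ j, p j x (x j)

/-- Expectation of `f` under the (finitely supported) law `P`. -/
def expVal {N : ℕ} {A : Type*} [Fintype A] (P f : (Fin N → A) → ℝ) : ℝ := ∑ x, P x * f x

/-- The causal interdependence matrix: `H i j` is the maximal total-variation shift of the
kernel at step `j` caused by modifying coordinate `i` of the history (all other coordinates
before `j` held fixed); it vanishes for `i ≥ j`. -/
def Hmat {N : ℕ} {A : Type*} [Fintype A]
    (p : Fin N → (Fin N → A) → A → ℝ) : Matrix (Fin N) (Fin N) ℝ := fun i j =>
  if i < j then
    ⨆ q : {q : (Fin N → A) × (Fin N → A) // ∀ m, m < j → m ≠ i → q.1 m = q.2 m},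
      dTV (p j q.1.1) (p j q.1.2)
  else 0

/-- The causal causalResolvent `Γ = (I - H)⁻¹`. -/
def causalResolvent {N : ℕ} (H : Matrix (Fin N) (Fin N) ℝ) : Matrix (Fin N) (Fin N) ℝ :=
  (1 - H)⁻¹

/-- `f` admits the (nonnegative) sensitivity vector `c`. -/
def HasSensitivity {N : ℕ} {A : Type*} [DecidableEq A] [Fintype A]
    (f : (Fin N → A) → ℝ) (c : Fin N → ℝ) : Prop :=
  (∀ j, 0 ≤ c j) ∧ ∀ x y, |f x - f y| ≤ ∑ j, if x j ≠ y j then c j else 0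

lemma hoeffding_sum {A : Type*} [Fintype A] [Nonempty A] (w g : A → ℝ)
    (hw0 : ∀ a, 0 ≤ w a) (hw1 : ∑ a, w a = 1) (hmean : ∑ a, w a * g a = 0)
    {B : ℝ} (hosc : ∀ a b, g a - g b ≤ B) (t : ℝ) :
    ∑ a, w a * Real.exp (t * g a) ≤ Real.exp (t ^ 2 * B ^ 2 / 8) := by
  classical
  set S : ℝ → ℝ := fun t => ∑ a, w a * Real.exp (t * g a) with hSdef
  set S1 : ℝ → ℝ := fun t => ∑ a, w a * g a * Real.exp (t * g a) with hS1def
  set S2 : ℝ → ℝ := fun t => ∑ a, w a * g a ^ 2 * Real.exp (t * g a) with hS2def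
  have hS : ∀ u : ℝ, HasDerivAt S (S1 u) u := by
    intro u
    have h : HasDerivAt (fun t => ∑ a, w a * Real.exp (t * g a))
        (∑ a, w a * (Real.exp (u * g a) * (1 * g a))) u :=
      HasDerivAt.fun_sum (fun a _ => (((hasDerivAt_id u).mul_const (g a)).exp).const_mul (w a))
    have : (∑ a, w a * (Real.exp (u * g a) * (1 * g a))) = S1 u :=
      Finset.sum_congr rfl (fun a _ => by ring)
    rw [this] at h; exact h
  have hS1 : ∀ u : ℝ, HasDerivAt S1 (S2 u) u := by
    intro u
    have h : HasDerivAt (fun t => ∑ a, w a * g a * Real.exp (t * g a))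
        (∑ a, w a * g a * (Real.exp (u * g a) * (1 * g a))) u :=
      HasDerivAt.fun_sum (fun a _ => (((hasDerivAt_id u).mul_const (g a)).exp).const_mul (w a * g a))
    have : (∑ a, w a * g a * (Real.exp (u * g a) * (1 * g a))) = S2 u :=
      Finset.sum_congr rfl (fun a _ => by ring)
    rw [this] at h; exact h
  have hSpos : ∀ u : ℝ, 0 < S u := by
    intro u
    have hex : ∃ a, 0 < w a := by
      by_contra hc
      push_neg at hc
      have : ∑ a, w a = 0 := le_antisymm (Finset.sum_nonpos (fun a _ => hc a))
        (Finset.sum_nonneg (fun a _ => hw0 a))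
      rw [this] at hw1; norm_num at hw1
    obtain ⟨a, ha⟩ := hex
    exact Finset.sum_pos' (fun b _ => mul_nonneg (hw0 b) (Real.exp_pos _).le)
      ⟨a, Finset.mem_univ a, mul_pos ha (Real.exp_pos _)⟩
  have hB0 : 0 ≤ B := by have := hosc (Classical.arbitrary A) (Classical.arbitrary A); linarith
  -- key second-derivative bound
  have hkey : ∀ u : ℝ, S2 u * S u - S1 u ^ 2 ≤ B ^ 2 / 4 * S u ^ 2 := by
    intro u
    obtain ⟨a1, _, hM⟩ := Finset.exists_mem_eq_sup' (Finset.univ_nonempty (α := A)) g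
    obtain ⟨a2, _, hL⟩ := Finset.exists_mem_eq_inf' (Finset.univ_nonempty (α := A)) g
    set M := Finset.univ.sup' Finset.univ_nonempty g
    set L := Finset.univ.inf' Finset.univ_nonempty g
    set m : ℝ := (M + L) / 2 with hm
    have hML : M - L ≤ B := by rw [hM, hL]; exact hosc a1 a2
    have habs : ∀ a, |g a - m| ≤ B / 2 := by
      intro a
      have h1 : g a ≤ M := Finset.le_sup' g (Finset.mem_univ a)
      have h2 : L ≤ g a := Finset.inf'_le g (Finset.mem_univ a)
      rw [abs_le]; constructor <;> [linarith; linarith]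
    set Q2 : ℝ := ∑ a, w a * (g a - m) ^ 2 * Real.exp (u * g a) with hQ2def
    set Q1 : ℝ := ∑ a, w a * (g a - m) * Real.exp (u * g a) with hQ1def
    have hQ2 : Q2 = S2 u - 2 * m * S1 u + m ^ 2 * S u := by
      simp only [hQ2def, hSdef, hS1def, hS2def, Finset.mul_sum, ← Finset.sum_sub_distrib,
        ← Finset.sum_add_distrib]
      exact Finset.sum_congr rfl (fun a _ => by ring)
    have hQ1 : Q1 = S1 u - m * S u := by
      simp only [hQ1def, hSdef, hS1def, Finset.mul_sum, ← Finset.sum_sub_distrib]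
      exact Finset.sum_congr rfl (fun a _ => by ring)
    have hid : S2 u * S u - S1 u ^ 2 = Q2 * S u - Q1 ^ 2 := by rw [hQ1, hQ2]; ring
    have hQ2le : Q2 ≤ B ^ 2 / 4 * S u := by
      rw [hQ2def, hSdef, Finset.mul_sum]
      apply Finset.sum_le_sum
      intro a _
      have h1 : (g a - m) ^ 2 ≤ (B / 2) ^ 2 := by
        have := habs a
        nlinarith [abs_nonneg (g a - m), sq_abs (g a - m)]
      have h2 : 0 ≤ w a * Real.exp (u * g a) := mul_nonneg (hw0 a) (Real.exp_pos _).le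
      nlinarith [Real.exp_pos (u * g a), hw0 a]
    have hQ1sq : 0 ≤ Q1 ^ 2 := sq_nonneg _
    have hSnn : 0 ≤ S u := (hSpos u).le
    calc S2 u * S u - S1 u ^ 2 = Q2 * S u - Q1 ^ 2 := hid
      _ ≤ Q2 * S u := by linarith
      _ ≤ (B ^ 2 / 4 * S u) * S u := mul_le_mul_of_nonneg_right hQ2le hSnn
      _ = B ^ 2 / 4 * S u ^ 2 := by ring
  -- derivative of the comparison function
  set D : ℝ → ℝ := fun u => B ^ 2 / 4 * u - S1 u / S u with hDdef
  set φ : ℝ → ℝ := fun u => B ^ 2 / 8 * u ^ 2 - Real.log (S u) with hφdef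
  have hφ' : ∀ u : ℝ, HasDerivAt φ (D u) u := by
    intro u
    have h1 : HasDerivAt (fun u : ℝ => B ^ 2 / 8 * u ^ 2) (B ^ 2 / 8 * (2 * u ^ 1)) u :=
      (hasDerivAt_pow 2 u).const_mul (B ^ 2 / 8)
    have h2 : HasDerivAt (fun u => Real.log (S u)) (S1 u / S u) u :=
      (hS u).log (ne_of_gt (hSpos u))
    have h := h1.sub h2
    have : B ^ 2 / 8 * (2 * u ^ 1) - S1 u / S u = D u := by rw [hDdef]; ring
    rw [this] at h; exact h
  have hD' : ∀ u : ℝ, HasDerivAt D (B ^ 2 / 4 - (S2 u * S u - S1 u * S1 u) / S u ^ 2) u := by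
    intro u
    have h1 : HasDerivAt (fun u : ℝ => B ^ 2 / 4 * u) (B ^ 2 / 4 * 1) u :=
      (hasDerivAt_id u).const_mul (B ^ 2 / 4)
    have h2 : HasDerivAt (fun u => S1 u / S u)
        ((S2 u * S u - S1 u * S1 u) / S u ^ 2) u :=
      (hS1 u).div (hS u) (ne_of_gt (hSpos u))
    have h := h1.sub h2
    have : B ^ 2 / 4 * 1 - (S2 u * S u - S1 u * S1 u) / S u ^ 2
        = B ^ 2 / 4 - (S2 u * S u - S1 u * S1 u) / S u ^ 2 := by ring
    rw [this] at h; exact h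
  have hDnonneg : ∀ u : ℝ, 0 ≤ B ^ 2 / 4 - (S2 u * S u - S1 u * S1 u) / S u ^ 2 := by
    intro u
    have hS2pos : 0 < S u ^ 2 := pow_pos (hSpos u) 2
    have h := hkey u
    rw [sub_nonneg, div_le_iff₀ hS2pos]
    nlinarith [h]
  have hDmono : Monotone D := by
    apply monotone_of_deriv_nonneg (fun u => (hD' u).differentiableAt)
    intro u
    rw [(hD' u).deriv]
    exact hDnonneg u
  have hS0 : S 0 = 1 := by
    simp only [hSdef]
    simpa [Real.exp_zero] using hw1
  have hS10 : S1 0 = 0 := by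
    simp only [hS1def]
    simpa [Real.exp_zero] using hmean
  have hD0 : D 0 = 0 := by
    simp [hDdef, hS10]
  have hdiffphi : Differentiable ℝ φ := fun u => (hφ' u).differentiableAt
  have hmin : ∀ u : ℝ, φ 0 ≤ φ u := by
    intro u
    rcases le_total 0 u with hu | hu
    · have hmono : MonotoneOn φ (Set.Ici (0:ℝ)) := by
        apply monotoneOn_of_deriv_nonneg (convex_Ici 0)
          hdiffphi.continuous.continuousOn hdiffphi.differentiableOn
        intro x hx
        rw [interior_Ici] at hx
        rw [(hφ' x).deriv]
        have : D 0 ≤ D x := hDmono (le_of_lt hx)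
        linarith [hD0 ▸ this]
      exact hmono Set.self_mem_Ici hu hu
    · have hanti : AntitoneOn φ (Set.Iic (0:ℝ)) := by
        apply antitoneOn_of_deriv_nonpos (convex_Iic 0)
          hdiffphi.continuous.continuousOn hdiffphi.differentiableOn
        intro x hx
        rw [interior_Iic] at hx
        rw [(hφ' x).deriv]
        have : D x ≤ D 0 := hDmono (le_of_lt hx)
        linarith [hD0 ▸ this]
      exact hanti hu Set.self_mem_Iic hu
  have hφ0 : φ 0 = 0 := by simp [hφdef, hS0]
  have hlog : Real.log (S t) ≤ B ^ 2 / 8 * t ^ 2 := by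
    have := hmin t
    rw [hφ0] at this
    simp only [hφdef] at this
    linarith
  have : S t ≤ Real.exp (B ^ 2 / 8 * t ^ 2) := by
    rw [← Real.exp_log (hSpos t)]
    exact Real.exp_le_exp.mpr hlog
  have heq : B ^ 2 / 8 * t ^ 2 = t ^ 2 * B ^ 2 / 8 := by ring
  rw [heq] at this
  exact this


section Main
variable {N : ℕ} {A : Type*} [Fintype A] [Nonempty A] [DecidableEq A]
  (p : Fin N → (Fin N → A) → A → ℝ)

/-- one-step conditional-expectation operator at coordinate `k`. -/
def Tker (k : Fin N) (h : (Fin N → A) → ℝ) : (Fin N → A) → ℝ :=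
  fun x => ∑ a, p k x a * h (Function.update x k a)

/-- single-coordinate Lipschitz property. -/
def SLip (h : (Fin N → A) → ℝ) (d : Fin N → ℝ) : Prop :=
  ∀ (x : Fin N → A) (i : Fin N) (a : A), |h (Function.update x i a) - h x| ≤ d i

lemma dTV_nonneg {A : Type*} [Fintype A] (μ ν : A → ℝ) : 0 ≤ dTV μ ν :=
  div_nonneg (Finset.sum_nonneg fun a _ => abs_nonneg _) (by norm_num)

lemma dTV_le_one {A : Type*} [Fintype A] {μ ν : A → ℝ} (hμ0 : ∀ a, 0 ≤ μ a)
    (hν0 : ∀ a, 0 ≤ ν a) (hμ1 : ∑ a, μ a = 1) (hν1 : ∑ a, ν a = 1) : dTV μ ν ≤ 1 := by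
  have h : ∑ a, |μ a - ν a| ≤ ∑ a, (μ a + ν a) :=
    Finset.sum_le_sum fun a _ => abs_le.mpr ⟨by linarith [hμ0 a, hν0 a], by linarith [hμ0 a, hν0 a]⟩
  rw [Finset.sum_add_distrib, hμ1, hν1] at h
  unfold dTV; linarith

set_option linter.unusedSectionVars false

lemma Hmat_nonneg (i j : Fin N) : 0 ≤ Hmat p i j := by
  unfold Hmat
  split
  · exact Real.iSup_nonneg fun q => dTV_nonneg _ _
  · exact le_rfl

lemma Hmat_eq_zero {i j : Fin N} (h : ¬ i < j) : Hmat p i j = 0 := by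
  unfold Hmat; rw [if_neg h]

lemma dTV_le_Hmat (hp : IsCausalKernel p) {i j : Fin N} (hij : i < j) (x y : Fin N → A)
    (hxy : ∀ m, m < j → m ≠ i → x m = y m) :
    dTV (p j x) (p j y) ≤ Hmat p i j := by
  have hbdd : BddAbove (Set.range fun q : {q : (Fin N → A) × (Fin N → A) //
      ∀ m, m < j → m ≠ i → q.1 m = q.2 m} => dTV (p j q.1.1) (p j q.1.2)) := by
    refine ⟨1, ?_⟩
    rintro _ ⟨q, rfl⟩
    exact dTV_le_one (hp.1 j q.1.1) (hp.1 j q.1.2) (hp.2.1 j q.1.1) (hp.2.1 j q.1.2)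
  have := le_ciSup hbdd (⟨(x, y), hxy⟩ : {q : (Fin N → A) × (Fin N → A) //
      ∀ m, m < j → m ≠ i → q.1 m = q.2 m})
  unfold Hmat
  rw [if_pos hij]
  exact this

lemma kernel_update_high (hp : IsCausalKernel p) (j : Fin N) (x : Fin N → A) (m : Fin N) (a : A)
    (hjm : (j : ℕ) ≤ (m : ℕ)) : p j (Function.update x m a) = p j x := by
  apply hp.2.2
  intro i hi
  apply Function.update_of_ne
  intro hcon
  subst hcon
  exact absurd (lt_of_lt_of_le hi (Fin.le_def.mpr hjm)) (lt_irrefl _)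


lemma SLip_osc {h : (Fin N → A) → ℝ} {d : Fin N → ℝ} (hL : SLip h d)
    (x : Fin N → A) (k : Fin N) (a b : A) :
    |h (Function.update x k a) - h (Function.update x k b)| ≤ d k := by
  have := hL (Function.update x k b) k a
  rwa [Function.update_idem] at this

/-- Key transfer: averaging out coordinate `k` via the kernel shifts sensitivities by `H · d`. -/
lemma SLip_Tker (hp : IsCausalKernel p) {h : (Fin N → A) → ℝ} {d : Fin N → ℝ}
    (hd : ∀ i, 0 ≤ d i) (hL : SLip h d) (k : Fin N) :
    SLip (Tker p k h) (fun i => if i = k then 0 else d i + Hmat p i k * d k) := by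
  intro x i b
  by_cases hik : i = k
  · subst hik
    simp only [if_pos rfl]
    have : Tker p i h (Function.update x i b) = Tker p i h x := by
      unfold Tker
      apply Finset.sum_congr rfl
      intro a _
      rw [kernel_update_high p hp i x i b le_rfl, Function.update_idem]
    rw [this, sub_self, abs_zero]
    simp
  · simp only [if_neg hik]
    set x' := Function.update x i b with hx'
    have hsplit : Tker p k h x' - Tker p k h x
        = (∑ a, p k x' a * (h (Function.update x' k a) - h (Function.update x k a)))
          + ∑ a, (p k x' a - p k x a) * h (Function.update x k a) := by
      unfold Tker
      rw [← Finset.sum_add_distrib, ← Finset.sum_sub_distrib]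
      apply Finset.sum_congr rfl
      intro a _
      ring
    have hfirst : |∑ a, p k x' a * (h (Function.update x' k a) - h (Function.update x k a))|
        ≤ d i := by
      calc |∑ a, p k x' a * (h (Function.update x' k a) - h (Function.update x k a))|
          ≤ ∑ a, |p k x' a * (h (Function.update x' k a) - h (Function.update x k a))| :=
            Finset.abs_sum_le_sum_abs _ _
        _ ≤ ∑ a, p k x' a * d i := by
            apply Finset.sum_le_sum
            intro a _
            rw [abs_mul, abs_of_nonneg (hp.1 k x' a)]
            apply mul_le_mul_of_nonneg_left _ (hp.1 k x' a)
            have hcomm : Function.update x' k a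
                = Function.update (Function.update x k a) i b := by
              rw [hx', Function.update_comm hik]
            rw [hcomm]
            exact hL (Function.update x k a) i b
        _ = d i := by rw [← Finset.sum_mul, hp.2.1 k x', one_mul]
    by_cases hlt : i < k
    · -- second term bounded via total variation
      obtain ⟨a1, _, hM⟩ := Finset.exists_mem_eq_sup' (Finset.univ_nonempty (α := A))
        (fun a => h (Function.update x k a))
      obtain ⟨a2, _, hLo⟩ := Finset.exists_mem_eq_inf' (Finset.univ_nonempty (α := A))
        (fun a => h (Function.update x k a))
      set M := Finset.univ.sup' Finset.univ_nonempty (fun a => h (Function.update x k a))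
      set L := Finset.univ.inf' Finset.univ_nonempty (fun a => h (Function.update x k a))
      have hML : M - L ≤ d k := by
        rw [hM, hLo]
        calc h (Function.update x k a1) - h (Function.update x k a2)
            ≤ |h (Function.update x k a1) - h (Function.update x k a2)| := le_abs_self _
          _ ≤ d k := SLip_osc hL x k a1 a2
      set m0 : ℝ := (M + L) / 2 with hm0
      have habs : ∀ a, |h (Function.update x k a) - m0| ≤ d k / 2 := by
        intro a
        have h1 : h (Function.update x k a) ≤ M :=
          Finset.le_sup' (fun a => h (Function.update x k a)) (Finset.mem_univ a)
        have h2 : L ≤ h (Function.update x k a) :=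
          Finset.inf'_le (fun a => h (Function.update x k a)) (Finset.mem_univ a)
        rw [abs_le]
        constructor <;> [skip; skip] <;> · rw [hm0]; linarith
      have hzero : ∑ a, (p k x' a - p k x a) = 0 := by
        rw [Finset.sum_sub_distrib, hp.2.1, hp.2.1, sub_self]
      have hrw : ∑ a, (p k x' a - p k x a) * h (Function.update x k a)
          = ∑ a, (p k x' a - p k x a) * (h (Function.update x k a) - m0) := by
        rw [Finset.sum_congr rfl (fun a _ => by ring :
          ∀ a ∈ Finset.univ, (p k x' a - p k x a) * (h (Function.update x k a) - m0)
            = (p k x' a - p k x a) * h (Function.update x k a) - (p k x' a - p k x a) * m0),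
          Finset.sum_sub_distrib, ← Finset.sum_mul, hzero, zero_mul, sub_zero]
      have hsecond : |∑ a, (p k x' a - p k x a) * h (Function.update x k a)|
          ≤ Hmat p i k * d k := by
        rw [hrw]
        calc |∑ a, (p k x' a - p k x a) * (h (Function.update x k a) - m0)|
            ≤ ∑ a, |(p k x' a - p k x a) * (h (Function.update x k a) - m0)| :=
              Finset.abs_sum_le_sum_abs _ _
          _ ≤ ∑ a, |p k x' a - p k x a| * (d k / 2) := by
              apply Finset.sum_le_sum
              intro a _
              rw [abs_mul]
              exact mul_le_mul_of_nonneg_left (habs a) (abs_nonneg _)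
          _ = dTV (p k x') (p k x) * d k := by
              rw [← Finset.sum_mul]
              unfold dTV
              ring
          _ ≤ Hmat p i k * d k := by
              apply mul_le_mul_of_nonneg_right _ (hd k)
              apply dTV_le_Hmat p hp hlt
              intro m hm hmi
              rw [hx']
              exact Function.update_of_ne hmi b x
      calc |Tker p k h x' - Tker p k h x|
          ≤ |∑ a, p k x' a * (h (Function.update x' k a) - h (Function.update x k a))|
            + |∑ a, (p k x' a - p k x a) * h (Function.update x k a)| := by
            rw [hsplit]; exact abs_add_le _ _
        _ ≤ d i + Hmat p i k * d k := add_le_add hfirst hsecond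
    · -- i > k : kernel unchanged, second term vanishes
      have hpk : p k x' = p k x := by
        apply hp.2.2
        intro m hm
        rw [hx']
        have hki : k < i := lt_of_le_of_ne (le_of_not_gt hlt) (Ne.symm hik)
        exact Function.update_of_ne (ne_of_lt (lt_trans hm hki)) b x
      have hsecond : ∑ a, (p k x' a - p k x a) * h (Function.update x k a) = 0 := by
        rw [hpk]; simp
      have hH : Hmat p i k = 0 := Hmat_eq_zero p (by exact hlt)
      rw [hsplit, hsecond, add_zero, hH, zero_mul, add_zero]
      exact hfirst


/-- the tower of conditional expectations, averaging coordinates from the last one down. -/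
def Fseq (f : (Fin N → A) → ℝ) : ℕ → ((Fin N → A) → ℝ)
  | m => if h : m < N then Tker p ⟨m, h⟩ (Fseq f (m + 1)) else f
termination_by m => N - m
decreasing_by all_goals omega

lemma Fseq_eq (f : (Fin N → A) → ℝ) (m : ℕ) :
    Fseq p f m = if h : m < N then Tker p ⟨m, h⟩ (Fseq p f (m + 1)) else f := by
  rw [Fseq]

/-- the tower of sensitivity vectors. -/
def dseq (H : Matrix (Fin N) (Fin N) ℝ) (c : Fin N → ℝ) : ℕ → Fin N → ℝ
  | m => if h : m < N then
      (fun i => if i = ⟨m, h⟩ then 0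
        else dseq H c (m + 1) i + H i ⟨m, h⟩ * dseq H c (m + 1) ⟨m, h⟩)
    else c
termination_by m => N - m
decreasing_by all_goals omega

lemma dseq_eq (H : Matrix (Fin N) (Fin N) ℝ) (c : Fin N → ℝ) (m : ℕ) :
    dseq H c m = if h : m < N then
      (fun i => if i = ⟨m, h⟩ then 0
        else dseq H c (m + 1) i + H i ⟨m, h⟩ * dseq H c (m + 1) ⟨m, h⟩)
    else c := by
  rw [dseq]

lemma downward_induction {P : ℕ → Prop} (hbase : ∀ m, N ≤ m → P m)
    (hstep : ∀ m, m < N → P (m + 1) → P m) : ∀ m, P m := by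
  have key : ∀ s m, N ≤ m + s → P m := by
    intro s
    induction s with
    | zero => intro m hm; exact hbase m (by omega)
    | succ s ih =>
      intro m hm
      by_cases h : m < N
      · exact hstep m h (ih (m + 1) (by omega))
      · exact hbase m (by omega)
  intro m
  exact key N m (by omega)

lemma SLip_Fseq (hp : IsCausalKernel p) (f : (Fin N → A) → ℝ) (c : Fin N → ℝ)
    (hc : ∀ i, 0 ≤ c i) (hL : SLip f c) :
    ∀ m, (∀ i, 0 ≤ dseq (Hmat p) c m i) ∧ SLip (Fseq p f m) (dseq (Hmat p) c m) := by
  apply downward_induction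
  · intro m hm
    rw [Fseq_eq, dseq_eq, dif_neg (not_lt.mpr hm), dif_neg (not_lt.mpr hm)]
    exact ⟨hc, hL⟩
  · intro m hm ⟨ih0, ihL⟩
    rw [Fseq_eq, dseq_eq, dif_pos hm, dif_pos hm]
    constructor
    · intro i
      by_cases h : i = ⟨m, hm⟩
      · rw [if_pos h]
      · rw [if_neg h]
        exact add_nonneg (ih0 i) (mul_nonneg (Hmat_nonneg p _ _) (ih0 _))
    · exact SLip_Tker p hp ih0 ihL ⟨m, hm⟩

lemma Fseq_dep (hp : IsCausalKernel p) (f : (Fin N → A) → ℝ) :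
    ∀ m, ∀ x y : Fin N → A, (∀ j : Fin N, (j : ℕ) < m → x j = y j) →
      Fseq p f m x = Fseq p f m y := by
  apply downward_induction
  · intro m hm x y hxy
    have : x = y := funext fun j => hxy j (lt_of_lt_of_le j.isLt hm)
    rw [this]
  · intro m hm ih x y hxy
    rw [Fseq_eq, dif_pos hm]
    unfold Tker
    have hpxy : p ⟨m, hm⟩ x = p ⟨m, hm⟩ y :=
      hp.2.2 _ x y (fun i hi => hxy i hi)
    rw [hpxy]
    apply Finset.sum_congr rfl
    intro a _
    congr 1
    apply ih
    intro j hj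
    by_cases hjm : j = ⟨m, hm⟩
    · subst hjm; rw [Function.update_self, Function.update_self]
    · rw [Function.update_of_ne hjm, Function.update_of_ne hjm]
      apply hxy
      have : (j : ℕ) ≠ m := fun hc => hjm (Fin.ext hc)
      omega

section Matrix
variable (hp : IsCausalKernel p)

lemma oneSubH_det : (1 - Hmat p).det = 1 := by
  have htri : (1 - Hmat p).BlockTriangular id := by
    intro i j hij
    have hne : i ≠ j := fun h => absurd (h ▸ hij) (lt_irrefl _)
    have hH : Hmat p i j = 0 := Hmat_eq_zero p (fun h => absurd (lt_trans hij h) (lt_irrefl _))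
    simp [Matrix.sub_apply, Matrix.one_apply_ne hne, hH]
  rw [Matrix.det_of_upperTriangular htri]
  have : ∀ i : Fin N, (1 - Hmat p) i i = 1 := by
    intro i
    simp [Matrix.sub_apply, Matrix.one_apply_eq, Hmat_eq_zero p (lt_irrefl i)]
  rw [Finset.prod_congr rfl (fun i _ => this i)]
  simp

lemma gamma_rec : (1 - Hmat p)⁻¹ = 1 + Hmat p * (1 - Hmat p)⁻¹ := by
  have h : (1 - Hmat p) * (1 - Hmat p)⁻¹ = 1 :=
    Matrix.mul_nonsing_inv _ (by rw [oneSubH_det p]; exact isUnit_one)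
  rw [Matrix.sub_mul, Matrix.one_mul] at h
  exact sub_eq_iff_eq_add.mp h

lemma gamma_rec' : (1 - Hmat p)⁻¹ = 1 + (1 - Hmat p)⁻¹ * Hmat p := by
  have h : (1 - Hmat p)⁻¹ * (1 - Hmat p) = 1 :=
    Matrix.nonsing_inv_mul _ (by rw [oneSubH_det p]; exact isUnit_one)
  rw [Matrix.mul_sub, Matrix.mul_one] at h
  exact sub_eq_iff_eq_add.mp h

lemma gamma_nonneg : ∀ (j i : Fin N), 0 ≤ (1 - Hmat p)⁻¹ i j := by
  set Γ := (1 - Hmat p)⁻¹ with hΓ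
  have key : ∀ n : ℕ, ∀ j : Fin N, (j : ℕ) < n → ∀ i, 0 ≤ Γ i j := by
    intro n
    induction n with
    | zero => intro j hj; omega
    | succ n ih =>
      intro j hj i
      have hrec : Γ i j = (1 : Matrix (Fin N) (Fin N) ℝ) i j + ∑ m : Fin N, Γ i m * Hmat p m j := by
        conv_lhs => rw [hΓ, gamma_rec' p]
        simp [Matrix.add_apply, Matrix.mul_apply]
        rfl
      rw [hrec]
      apply add_nonneg
      · by_cases h : i = j
        · rw [h, Matrix.one_apply_eq]; norm_num
        · rw [Matrix.one_apply_ne h]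
      · apply Finset.sum_nonneg
        intro m _
        by_cases hmj : m < j
        · exact mul_nonneg (ih m (by omega) i) (Hmat_nonneg p m j)
        · rw [Hmat_eq_zero p hmj, mul_zero]
  intro j i
  exact key (j + 1) j (by omega) i

lemma gammaVec_nonneg (c : Fin N → ℝ) (hc : ∀ i, 0 ≤ c i) (k : Fin N) :
    0 ≤ (1 - Hmat p)⁻¹.mulVec c k := by
  simp only [Matrix.mulVec, dotProduct]
  apply Finset.sum_nonneg
  intro j _
  exact mul_nonneg (gamma_nonneg p j k) (hc j)

lemma gammaVec_rec (c : Fin N → ℝ) (k : Fin N) :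
    (1 - Hmat p)⁻¹.mulVec c k = c k + ∑ j, Hmat p k j * (1 - Hmat p)⁻¹.mulVec c j := by
  set Γ := (1 - Hmat p)⁻¹ with hΓ
  have hrec : ∀ i j : Fin N, Γ i j
      = (1 : Matrix (Fin N) (Fin N) ℝ) i j + ∑ m : Fin N, Hmat p i m * Γ m j := by
    intro i j
    conv_lhs => rw [hΓ, gamma_rec p]
    simp [Matrix.add_apply, Matrix.mul_apply]
    rfl
  simp only [Matrix.mulVec, dotProduct]
  have hterm : ∀ j : Fin N, Γ k j * c j
      = (1 : Matrix (Fin N) (Fin N) ℝ) k j * c j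
        + ∑ m : Fin N, Hmat p k m * (Γ m j * c j) := by
    intro j
    rw [hrec k j, add_mul, Finset.sum_mul]
    congr 1
    exact Finset.sum_congr rfl (fun m _ => by ring)
  rw [Finset.sum_congr rfl (fun j _ => hterm j), Finset.sum_add_distrib]
  congr 1
  · simp [Matrix.one_apply]
  · rw [Finset.sum_comm]
    apply Finset.sum_congr rfl
    intro m _
    rw [← Finset.mul_sum]

lemma sum_if_split (c : Fin N → ℝ) (i : Fin N) (m : ℕ) (hm : m < N)
    (v : Fin N → ℝ) :
    (∑ j : Fin N, (if m + 1 ≤ (j : ℕ) then Hmat p i j * v j else 0))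
      + Hmat p i ⟨m, hm⟩ * v ⟨m, hm⟩
    = ∑ j : Fin N, (if m ≤ (j : ℕ) then Hmat p i j * v j else 0) := by
  have hsplit : ∀ j : Fin N, (if m ≤ (j : ℕ) then Hmat p i j * v j else 0)
      = (if m + 1 ≤ (j : ℕ) then Hmat p i j * v j else 0)
        + (if (j : ℕ) = m then Hmat p i j * v j else 0) := by
    intro j
    rcases lt_trichotomy (j : ℕ) m with h | h | h
    · rw [if_neg (by omega), if_neg (by omega), if_neg (by omega)]; ring
    · rw [if_pos (by omega), if_neg (by omega), if_pos h]; ring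
    · rw [if_pos (by omega), if_pos (by omega), if_neg (by omega)]; ring
  rw [Finset.sum_congr rfl (fun j _ => hsplit j), Finset.sum_add_distrib]
  congr 1
  rw [Finset.sum_eq_single (⟨m, hm⟩ : Fin N)]
  · simp
  · intro j _ hj
    rw [if_neg (fun hc => hj (Fin.ext hc))]
  · intro h
    exact absurd (Finset.mem_univ _) h

lemma gammaVec_tail (c : Fin N → ℝ) (m : ℕ) (hm : m < N) :
    c ⟨m, hm⟩ + (∑ j : Fin N, (if m + 1 ≤ (j : ℕ)
        then Hmat p ⟨m, hm⟩ j * (1 - Hmat p)⁻¹.mulVec c j else 0))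
      = (1 - Hmat p)⁻¹.mulVec c ⟨m, hm⟩ := by
  rw [gammaVec_rec p]
  congr 1
  apply Finset.sum_congr rfl
  intro j _
  by_cases h : m + 1 ≤ (j : ℕ)
  · rw [if_pos h]
  · rw [if_neg h, Hmat_eq_zero p, zero_mul]
    intro hcon
    rw [Fin.lt_def] at hcon
    simp only at hcon
    omega

lemma dseq_le_gammaVec (c : Fin N → ℝ) (hc : ∀ i, 0 ≤ c i) :
    ∀ m, ∀ i : Fin N, dseq (Hmat p) c m i
      ≤ c i + ∑ j : Fin N, (if m ≤ (j : ℕ) then Hmat p i j * (1 - Hmat p)⁻¹.mulVec c j else 0) := by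
  have hnn : ∀ (m : ℕ) (i : Fin N),
      0 ≤ ∑ j : Fin N, (if m ≤ (j : ℕ) then Hmat p i j * (1 - Hmat p)⁻¹.mulVec c j else 0) := by
    intro m i
    apply Finset.sum_nonneg
    intro j _
    split
    · exact mul_nonneg (Hmat_nonneg p i j) (gammaVec_nonneg p c hc j)
    · exact le_rfl
  apply downward_induction
  · intro m hm i
    rw [dseq_eq, dif_neg (not_lt.mpr hm)]
    exact le_add_of_nonneg_right (hnn m i)
  · intro m hm ih i
    rw [dseq_eq, dif_pos hm]
    by_cases h : i = ⟨m, hm⟩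
    · rw [if_pos h]
      exact add_nonneg (hc i) (hnn m i)
    · rw [if_neg h]
      have h1 := ih i
      have h2 : dseq (Hmat p) c (m + 1) ⟨m, hm⟩ ≤ (1 - Hmat p)⁻¹.mulVec c ⟨m, hm⟩ := by
        rw [← gammaVec_tail p c m hm]
        exact ih ⟨m, hm⟩
      have h3 : Hmat p i ⟨m, hm⟩ * dseq (Hmat p) c (m + 1) ⟨m, hm⟩
          ≤ Hmat p i ⟨m, hm⟩ * (1 - Hmat p)⁻¹.mulVec c ⟨m, hm⟩ :=
        mul_le_mul_of_nonneg_left h2 (Hmat_nonneg p _ _)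
      calc dseq (Hmat p) c (m + 1) i + Hmat p i ⟨m, hm⟩ * dseq (Hmat p) c (m + 1) ⟨m, hm⟩
          ≤ (c i + ∑ j : Fin N, (if m + 1 ≤ (j : ℕ)
              then Hmat p i j * (1 - Hmat p)⁻¹.mulVec c j else 0))
            + Hmat p i ⟨m, hm⟩ * (1 - Hmat p)⁻¹.mulVec c ⟨m, hm⟩ := add_le_add h1 h3
        _ = c i + ∑ j : Fin N, (if m ≤ (j : ℕ)
              then Hmat p i j * (1 - Hmat p)⁻¹.mulVec c j else 0) := by
            rw [add_assoc, sum_if_split p c i m hm]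

lemma dseq_step_le (c : Fin N → ℝ) (hc : ∀ i, 0 ≤ c i) (m : ℕ) (hm : m < N) :
    dseq (Hmat p) c (m + 1) ⟨m, hm⟩ ≤ (1 - Hmat p)⁻¹.mulVec c ⟨m, hm⟩ := by
  rw [← gammaVec_tail p c m hm]
  exact dseq_le_gammaVec p c hc (m + 1) ⟨m, hm⟩

end Matrix


lemma sum_update_mul_card (g : (Fin N → A) → ℝ) (m : Fin N) :
    ∑ x : Fin N → A, ∑ a : A, g (Function.update x m a)
      = (Fintype.card A : ℝ) * ∑ x : Fin N → A, g x := by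
  classical
  have hφ : Function.Involutive
      (fun q : (Fin N → A) × A => (Function.update q.1 m q.2, q.1 m)) := by
    intro q
    refine Prod.ext ?_ ?_
    · simp [Function.update_idem]
    · simp
  have h1 : ∑ q : (Fin N → A) × A, g (Function.update q.1 m q.2)
      = ∑ q : (Fin N → A) × A, g q.1 := by
    have := Function.Bijective.sum_comp hφ.bijective (fun q : (Fin N → A) × A => g q.1)
    simpa using this
  calc ∑ x : Fin N → A, ∑ a : A, g (Function.update x m a)
      = ∑ q : (Fin N → A) × A, g (Function.update q.1 m q.2) := by
        rw [Fintype.sum_prod_type]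
    _ = ∑ q : (Fin N → A) × A, g q.1 := h1
    _ = ∑ x : Fin N → A, ∑ _a : A, g x := by rw [Fintype.sum_prod_type]
    _ = (Fintype.card A : ℝ) * ∑ x : Fin N → A, g x := by
        simp [Finset.sum_const, mul_comm, Finset.mul_sum]

lemma SLip_of_sens (f : (Fin N → A) → ℝ) (c : Fin N → ℝ) (hc : ∀ j, 0 ≤ c j)
    (h : ∀ x y, |f x - f y| ≤ ∑ j, if x j ≠ y j then c j else 0) : SLip f c := by
  intro x i a
  refine le_trans (h (Function.update x i a) x) ?_
  have hterm : ∀ j : Fin N, (if Function.update x i a j ≠ x j then c j else 0)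
      ≤ (if j = i then c i else 0) := by
    intro j
    by_cases hj : j = i
    · subst hj
      rw [if_pos rfl]
      split
      · exact le_rfl
      · exact hc j
    · rw [Function.update_of_ne hj, if_neg hj]
      simp
  calc (∑ j, if Function.update x i a j ≠ x j then c j else 0)
      ≤ ∑ j, (if j = i then c i else 0) := Finset.sum_le_sum (fun j _ => hterm j)
    _ = c i := by rw [Finset.sum_ite_eq' Finset.univ i (fun _ => c i), if_pos (Finset.mem_univ i)]

end Main


/-- **Sub-Gaussian moment generating function bound** (proof of Theorem 3.1): the centered
evaluation `f(X) - 𝔼 f(X)` is sub-Gaussian with variance proxy `‖Γc‖₂²/4`: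
`𝔼 exp(λ(f(X) - 𝔼 f(X))) ≤ exp(λ² ‖Γc‖₂² / 8)` for every `λ ∈ ℝ`. -/
theorem mgf_subgaussian_bound
    {N : ℕ} (hN : 1 ≤ N) {A : Type*} [Fintype A] [Nonempty A] [DecidableEq A]
    (p : Fin N → (Fin N → A) → A → ℝ) (hp : IsCausalKernel p)
    (f : (Fin N → A) → ℝ) (c : Fin N → ℝ) (hf : HasSensitivity f c)
    (lam : ℝ) :
    ∑ x, jointLaw p x * Real.exp (lam * (f x - expVal (jointLaw p) f)) ≤
      Real.exp (lam ^ 2 * (∑ k, ((causalResolvent (Hmat p)).mulVec c k) ^ 2) / 8) := by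
  classical
  obtain ⟨hc, hsens⟩ := hf
  have hLip : SLip f c := SLip_of_sens f c hc hsens
  set H := Hmat p with hH
  set v : Fin N → ℝ := (1 - H)⁻¹.mulVec c with hv
  have hSL := SLip_Fseq p hp f c hc hLip
  set κ : ℝ := ((Fintype.card A : ℝ))⁻¹ with hκ
  have hcardpos : (0 : ℝ) < (Fintype.card A : ℝ) := by
    exact_mod_cast Fintype.card_pos
  have hκpos : 0 < κ := by positivity
  -- the weights and partial sums
  set W : ℕ → (Fin N → A) → ℝ := fun m x =>
    (∏ j ∈ Finset.univ.filter (fun j : Fin N => (j : ℕ) < m), p j x (x j)) * κ ^ (N - m)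
    with hW
  set S : ℕ → ℝ := fun m => ∑ x, W m x * Real.exp (lam * Fseq p f m x) with hS
  set Mn : ℕ → ℝ := fun m => ∑ x, W m x * Fseq p f m x with hMn
  have hWnn : ∀ m x, 0 ≤ W m x := by
    intro m x
    apply mul_nonneg
    · exact Finset.prod_nonneg (fun j _ => hp.1 j x (x j))
    · positivity
  -- filter facts
  have hfilter : ∀ (m : ℕ) (hm : m < N),
      Finset.univ.filter (fun j : Fin N => (j : ℕ) < m + 1)
        = insert (⟨m, hm⟩ : Fin N) (Finset.univ.filter (fun j : Fin N => (j : ℕ) < m)) := by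
    intro m hm
    ext j
    simp only [Finset.mem_filter, Finset.mem_univ, true_and, Finset.mem_insert]
    constructor
    · intro h
      by_cases hjm : (j : ℕ) = m
      · exact Or.inl (Fin.ext hjm)
      · exact Or.inr (by omega)
    · rintro (h | h)
      · subst h; simp
      · omega
  have hmem : ∀ (m : ℕ) (hm : m < N),
      (⟨m, hm⟩ : Fin N) ∉ Finset.univ.filter (fun j : Fin N => (j : ℕ) < m) := by
    intro m hm
    simp
  -- prefix product invariance under update of coordinate m
  have hprod : ∀ (m : ℕ) (hm : m < N) (x : Fin N → A) (a : A),
      (∏ j ∈ Finset.univ.filter (fun j : Fin N => (j : ℕ) < m),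
        p j (Function.update x ⟨m, hm⟩ a) ((Function.update x ⟨m, hm⟩ a) j))
      = ∏ j ∈ Finset.univ.filter (fun j : Fin N => (j : ℕ) < m), p j x (x j) := by
    intro m hm x a
    apply Finset.prod_congr rfl
    intro j hj
    rw [Finset.mem_filter] at hj
    have hjm : (j : ℕ) < m := hj.2
    rw [kernel_update_high p hp j x ⟨m, hm⟩ a (by exact le_of_lt hjm),
      Function.update_of_ne (by intro hcon; subst hcon; simp at hjm)]
  have hWstep : ∀ (m : ℕ) (hm : m < N) (x : Fin N → A) (a : A),
      W (m + 1) (Function.update x ⟨m, hm⟩ a)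
        = ((∏ j ∈ Finset.univ.filter (fun j : Fin N => (j : ℕ) < m), p j x (x j))
            * κ ^ (N - (m + 1))) * p ⟨m, hm⟩ x a := by
    intro m hm x a
    rw [hW]
    simp only
    rw [hfilter m hm, Finset.prod_insert (hmem m hm), hprod m hm x a,
      kernel_update_high p hp ⟨m, hm⟩ x ⟨m, hm⟩ a le_rfl, Function.update_self]
    ring
  -- Hoeffding step
  have hhoef : ∀ (m : ℕ) (hm : m < N) (x : Fin N → A),
      ∑ a, p ⟨m, hm⟩ x a * Real.exp (lam * Fseq p f (m + 1) (Function.update x ⟨m, hm⟩ a))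
        ≤ Real.exp (lam * Fseq p f m x)
          * Real.exp (lam ^ 2 * (dseq H c (m + 1) ⟨m, hm⟩) ^ 2 / 8) := by
    intro m hm x
    set B := dseq H c (m + 1) ⟨m, hm⟩ with hB
    set g : A → ℝ := fun a => Fseq p f (m + 1) (Function.update x ⟨m, hm⟩ a)
      - Fseq p f m x with hg
    have hFm : Fseq p f m x = ∑ a, p ⟨m, hm⟩ x a * Fseq p f (m + 1) (Function.update x ⟨m, hm⟩ a) := by
      conv_lhs => rw [Fseq_eq, dif_pos hm]
      rw [Tker]
    have hmean : ∑ a, p ⟨m, hm⟩ x a * g a = 0 := by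
      rw [hg]
      simp only [mul_sub]
      rw [Finset.sum_sub_distrib, ← Finset.sum_mul, hp.2.1, one_mul, ← hFm, sub_self]
    have hosc : ∀ a b : A, g a - g b ≤ B := by
      intro a b
      rw [hg]
      simp only
      have h1 : |Fseq p f (m + 1) (Function.update x ⟨m, hm⟩ a)
          - Fseq p f (m + 1) (Function.update x ⟨m, hm⟩ b)| ≤ B := by
        rw [hB, hH]
        exact SLip_osc (hSL (m + 1)).2 x ⟨m, hm⟩ a b
      calc Fseq p f (m + 1) (Function.update x ⟨m, hm⟩ a) - Fseq p f m x
          - (Fseq p f (m + 1) (Function.update x ⟨m, hm⟩ b) - Fseq p f m x)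
          = Fseq p f (m + 1) (Function.update x ⟨m, hm⟩ a)
            - Fseq p f (m + 1) (Function.update x ⟨m, hm⟩ b) := by ring
        _ ≤ |Fseq p f (m + 1) (Function.update x ⟨m, hm⟩ a)
            - Fseq p f (m + 1) (Function.update x ⟨m, hm⟩ b)| := le_abs_self _
        _ ≤ B := h1
    have hhoe := hoeffding_sum (p ⟨m, hm⟩ x) g (hp.1 ⟨m, hm⟩ x) (hp.2.1 ⟨m, hm⟩ x)
      hmean hosc lam
    have hexp : ∀ a : A, Real.exp (lam * Fseq p f (m + 1) (Function.update x ⟨m, hm⟩ a))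
        = Real.exp (lam * g a) * Real.exp (lam * Fseq p f m x) := by
      intro a
      rw [← Real.exp_add, hg]
      congr 1
      ring
    calc ∑ a, p ⟨m, hm⟩ x a * Real.exp (lam * Fseq p f (m + 1) (Function.update x ⟨m, hm⟩ a))
        = (∑ a, p ⟨m, hm⟩ x a * Real.exp (lam * g a)) * Real.exp (lam * Fseq p f m x) := by
          rw [Finset.sum_mul]
          apply Finset.sum_congr rfl
          intro a _
          rw [hexp a]
          ring
      _ ≤ Real.exp (lam ^ 2 * B ^ 2 / 8) * Real.exp (lam * Fseq p f m x) :=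
          mul_le_mul_of_nonneg_right hhoe (Real.exp_pos _).le
      _ = Real.exp (lam * Fseq p f m x) * Real.exp (lam ^ 2 * B ^ 2 / 8) := by ring
  -- Fubini over coordinate m
  have hfub : ∀ (m : ℕ) (hm : m < N) (G : (Fin N → A) → ℝ),
      ∑ x, G x = κ * ∑ x, ∑ a, G (Function.update x ⟨m, hm⟩ a) := by
    intro m hm G
    rw [sum_update_mul_card G ⟨m, hm⟩, hκ, ← mul_assoc, inv_mul_cancel₀ (ne_of_gt hcardpos),
      one_mul]
  -- step inequality for S
  have hSstep : ∀ (m : ℕ) (hm : m < N),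
      S (m + 1) ≤ S m * Real.exp (lam ^ 2 * (dseq H c (m + 1) ⟨m, hm⟩) ^ 2 / 8) := by
    intro m hm
    have hpowm : κ ^ (N - m) = κ ^ (N - (m + 1)) * κ := by
      rw [← pow_succ]
      congr 1
      omega
    rw [hS]
    simp only
    rw [hfub m hm (fun x => W (m + 1) x * Real.exp (lam * Fseq p f (m + 1) x))]
    have hinner : ∀ x : Fin N → A,
        ∑ a, W (m + 1) (Function.update x ⟨m, hm⟩ a)
          * Real.exp (lam * Fseq p f (m + 1) (Function.update x ⟨m, hm⟩ a))
        ≤ ((∏ j ∈ Finset.univ.filter (fun j : Fin N => (j : ℕ) < m), p j x (x j))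
            * κ ^ (N - (m + 1)))
          * (Real.exp (lam * Fseq p f m x)
            * Real.exp (lam ^ 2 * (dseq H c (m + 1) ⟨m, hm⟩) ^ 2 / 8)) := by
      intro x
      have h1 : ∑ a, W (m + 1) (Function.update x ⟨m, hm⟩ a)
          * Real.exp (lam * Fseq p f (m + 1) (Function.update x ⟨m, hm⟩ a))
          = ((∏ j ∈ Finset.univ.filter (fun j : Fin N => (j : ℕ) < m), p j x (x j))
              * κ ^ (N - (m + 1)))
            * ∑ a, p ⟨m, hm⟩ x a
              * Real.exp (lam * Fseq p f (m + 1) (Function.update x ⟨m, hm⟩ a)) := by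
        rw [Finset.mul_sum]
        apply Finset.sum_congr rfl
        intro a _
        rw [hWstep m hm x a]
        ring
      rw [h1]
      apply mul_le_mul_of_nonneg_left (hhoef m hm x)
      apply mul_nonneg (Finset.prod_nonneg (fun j _ => hp.1 j x (x j)))
      positivity
    calc κ * ∑ x, ∑ a, W (m + 1) (Function.update x ⟨m, hm⟩ a)
          * Real.exp (lam * Fseq p f (m + 1) (Function.update x ⟨m, hm⟩ a))
        ≤ κ * ∑ x, ((∏ j ∈ Finset.univ.filter (fun j : Fin N => (j : ℕ) < m), p j x (x j))
            * κ ^ (N - (m + 1)))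
          * (Real.exp (lam * Fseq p f m x)
            * Real.exp (lam ^ 2 * (dseq H c (m + 1) ⟨m, hm⟩) ^ 2 / 8)) := by
          apply mul_le_mul_of_nonneg_left _ hκpos.le
          exact Finset.sum_le_sum (fun x _ => hinner x)
      _ = (∑ x, W m x * Real.exp (lam * Fseq p f m x))
            * Real.exp (lam ^ 2 * (dseq H c (m + 1) ⟨m, hm⟩) ^ 2 / 8) := by
          rw [Finset.mul_sum, Finset.sum_mul]
          apply Finset.sum_congr rfl
          intro x _
          rw [hW]
          simp only
          rw [hpowm]
          ring
  -- step equality for Mn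
  have hMstep : ∀ (m : ℕ) (hm : m < N), Mn (m + 1) = Mn m := by
    intro m hm
    have hpowm : κ ^ (N - m) = κ ^ (N - (m + 1)) * κ := by
      rw [← pow_succ]
      congr 1
      omega
    rw [hMn]
    simp only
    rw [hfub m hm (fun x => W (m + 1) x * Fseq p f (m + 1) x)]
    have hinner : ∀ x : Fin N → A,
        ∑ a, W (m + 1) (Function.update x ⟨m, hm⟩ a)
          * Fseq p f (m + 1) (Function.update x ⟨m, hm⟩ a)
        = ((∏ j ∈ Finset.univ.filter (fun j : Fin N => (j : ℕ) < m), p j x (x j))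
            * κ ^ (N - (m + 1))) * Fseq p f m x := by
      intro x
      have hFm : Fseq p f m x
          = ∑ a, p ⟨m, hm⟩ x a * Fseq p f (m + 1) (Function.update x ⟨m, hm⟩ a) := by
        conv_lhs => rw [Fseq_eq, dif_pos hm]
        rw [Tker]
      rw [hFm, Finset.mul_sum]
      apply Finset.sum_congr rfl
      intro a _
      rw [hWstep m hm x a]
      ring
    rw [Finset.sum_congr rfl (fun x _ => hinner x)]
    rw [Finset.mul_sum]
    apply Finset.sum_congr rfl
    intro x _
    rw [hW]
    simp only
    rw [hpowm]
    ring
  -- Mn is constant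
  have hMchain : ∀ m, m ≤ N → Mn m = Mn 0 := by
    intro m
    induction m with
    | zero => intro _; rfl
    | succ m ih =>
      intro hm
      rw [hMstep m (by omega), ih (by omega)]
  -- endpoint values
  have hfiltN : Finset.univ.filter (fun j : Fin N => (j : ℕ) < N) = Finset.univ := by
    apply Finset.filter_true_of_mem
    intro j _
    exact j.isLt
  have hfseqN : Fseq p f N = f := by
    rw [Fseq_eq, dif_neg (lt_irrefl N)]
  have hWN : ∀ x, W N x = jointLaw p x := by
    intro x
    rw [hW]
    simp only
    rw [hfiltN, Nat.sub_self, pow_zero, mul_one]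
    rfl
  have hMnN : Mn N = expVal (jointLaw p) f := by
    rw [hMn]
    simp only
    rw [expVal]
    apply Finset.sum_congr rfl
    intro x _
    rw [hWN x, hfseqN]
  have hfilt0 : Finset.univ.filter (fun j : Fin N => (j : ℕ) < 0) = ∅ := by
    apply Finset.filter_false_of_mem
    intro j _
    omega
  have hW0 : ∀ x : Fin N → A, W 0 x = κ ^ N := by
    intro x
    rw [hW]
    simp only
    rw [hfilt0, Finset.prod_empty, one_mul, Nat.sub_zero]
  have hsumκ : ∑ _x : Fin N → A, κ ^ N = 1 := by
    rw [Finset.sum_const, Finset.card_univ, Fintype.card_fun]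
    simp only [Fintype.card_fin, nsmul_eq_mul]
    push_cast
    rw [hκ, ← mul_pow, mul_inv_cancel₀ (ne_of_gt hcardpos), one_pow]
  have hF0const : ∀ x y : Fin N → A, Fseq p f 0 x = Fseq p f 0 y := by
    intro x y
    exact Fseq_dep p hp f 0 x y (fun j hj => absurd hj (Nat.not_lt_zero _))
  obtain x0 : Fin N → A := Classical.arbitrary _
  have hF0 : ∀ x, Fseq p f 0 x = expVal (jointLaw p) f := by
    intro x
    have h1 : Mn 0 = Fseq p f 0 x := by
      rw [hMn]
      simp only
      calc ∑ y, W 0 y * Fseq p f 0 y = ∑ y : Fin N → A, κ ^ N * Fseq p f 0 x := by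
            apply Finset.sum_congr rfl
            intro y _
            rw [hW0 y, hF0const y x]
        _ = Fseq p f 0 x := by
            rw [← Finset.sum_mul, hsumκ, one_mul]
    rw [← h1, ← hMchain N le_rfl, hMnN]
  have hS0 : S 0 = Real.exp (lam * expVal (jointLaw p) f) := by
    rw [hS]
    simp only
    calc ∑ x, W 0 x * Real.exp (lam * Fseq p f 0 x)
        = ∑ x : Fin N → A, κ ^ N * Real.exp (lam * expVal (jointLaw p) f) := by
          apply Finset.sum_congr rfl
          intro x _
          rw [hW0 x, hF0 x]
      _ = Real.exp (lam * expVal (jointLaw p) f) := by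
          rw [← Finset.sum_mul, hsumκ, one_mul]
  -- the B sequence
  set Bv : ℕ → ℝ := fun k => if hk : k < N then dseq H c (k + 1) ⟨k, hk⟩ else 0 with hBv
  have hSchain : ∀ m, m ≤ N →
      S m ≤ S 0 * Real.exp (lam ^ 2 * (∑ k ∈ Finset.range m, (Bv k) ^ 2) / 8) := by
    intro m
    induction m with
    | zero =>
      intro _
      simp
    | succ m ih =>
      intro hm
      have hmN : m < N := by omega
      have h1 := hSstep m hmN
      have h2 : Bv m = dseq H c (m + 1) ⟨m, hmN⟩ := by rw [hBv]; simp only; rw [dif_pos hmN]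
      calc S (m + 1) ≤ S m * Real.exp (lam ^ 2 * (dseq H c (m + 1) ⟨m, hmN⟩) ^ 2 / 8) := h1
        _ ≤ (S 0 * Real.exp (lam ^ 2 * (∑ k ∈ Finset.range m, (Bv k) ^ 2) / 8))
              * Real.exp (lam ^ 2 * (dseq H c (m + 1) ⟨m, hmN⟩) ^ 2 / 8) :=
            mul_le_mul_of_nonneg_right (ih (by omega)) (Real.exp_pos _).le
        _ = S 0 * Real.exp (lam ^ 2 * (∑ k ∈ Finset.range (m + 1), (Bv k) ^ 2) / 8) := by
            rw [mul_assoc, ← Real.exp_add, Finset.sum_range_succ, h2]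
            congr 2
            ring
  -- comparing B to the resolvent vector
  have hBle : ∀ k ∈ Finset.range N, (Bv k) ^ 2 ≤ (fun k : ℕ =>
      if hk : k < N then (v ⟨k, hk⟩) ^ 2 else 0) k := by
    intro k hk
    rw [Finset.mem_range] at hk
    simp only [dif_pos hk]
    rw [hBv]
    simp only
    rw [dif_pos hk]
    have h1 : dseq H c (k + 1) ⟨k, hk⟩ ≤ v ⟨k, hk⟩ := by
      rw [hv, hH]
      exact dseq_step_le p c hc k hk
    have h0 : 0 ≤ dseq H c (k + 1) ⟨k, hk⟩ := (hSL (k + 1)).1 ⟨k, hk⟩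
    exact pow_le_pow_left₀ h0 h1 2
  have hsum : ∑ k ∈ Finset.range N, (Bv k) ^ 2 ≤ ∑ k : Fin N, (v k) ^ 2 := by
    have h1 : ∑ k : Fin N, (v k) ^ 2
        = ∑ k ∈ Finset.range N, (fun k : ℕ => if hk : k < N then (v ⟨k, hk⟩) ^ 2 else 0) k := by
      rw [← Fin.sum_univ_eq_sum_range]
      apply Finset.sum_congr rfl
      intro k _
      simp only [dif_pos k.isLt, Fin.eta]
    rw [h1]
    exact Finset.sum_le_sum hBle
  -- final assembly
  have hLHS : ∑ x, jointLaw p x * Real.exp (lam * (f x - expVal (jointLaw p) f))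
      = Real.exp (-(lam * expVal (jointLaw p) f)) * S N := by
    rw [hS]
    simp only
    rw [Finset.mul_sum]
    apply Finset.sum_congr rfl
    intro x _
    rw [hWN x, hfseqN, mul_sub, Real.exp_sub]
    rw [Real.exp_neg]
    field_simp
  rw [hLHS]
  have hchain := hSchain N le_rfl
  rw [hS0] at hchain
  calc Real.exp (-(lam * expVal (jointLaw p) f)) * S N
      ≤ Real.exp (-(lam * expVal (jointLaw p) f))
        * (Real.exp (lam * expVal (jointLaw p) f)
          * Real.exp (lam ^ 2 * (∑ k ∈ Finset.range N, (Bv k) ^ 2) / 8)) :=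
        mul_le_mul_of_nonneg_left hchain (Real.exp_pos _).le
    _ = Real.exp (lam ^ 2 * (∑ k ∈ Finset.range N, (Bv k) ^ 2) / 8) := by
        rw [← mul_assoc, ← Real.exp_add]
        simp
    _ ≤ Real.exp (lam ^ 2 * (∑ k, ((causalResolvent (Hmat p)).mulVec c k) ^ 2) / 8) := by
        apply Real.exp_le_exp.mpr
        have hv' : ∀ k : Fin N, (causalResolvent (Hmat p)).mulVec c k = v k := by
          intro k
          rw [hv, hH, causalResolvent]
        rw [Finset.sum_congr rfl (fun (k : Fin N) _ => by rw [hv' k])]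
        have hlam2 : 0 ≤ lam ^ 2 := sq_nonneg lam
        have := mul_le_mul_of_nonneg_left hsum hlam2
        linarith
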